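/- Let A ∈ ℝ and let z₁,…,z₅ : ℝ → ℝ be differentiable functions satisfying the system (8): z₁' = 2z₄, z₂' = z₃, z₃' = −z₁ − 16A z₂ − 16 z₂², z₄' = −A z₁ + (1/3) z₅ − (8/3) z₁ z₂, z₅' = −6A z₄ + 2 z₁ z₃ − 8 z₂ z₄. Then F₂ = 9A² z₁² + z₅² + 6A z₁ z₅ − 2 z₁³ − 24A z₁² z₂ − 12 z₁ z₃ z₄ + 24 z₂ z₄² − 16 z₁² z₂² is a constant of motion: d/dt F₂(z(t)) = 0. -/

import Mathlib

/-! Along a curve, the derivative of F₂ is the gradient of F₂ paired with the velocity; for the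
velocity prescribed by system (8) this pairing vanishes identically as a polynomial in
`A, x₁, …, x₅`. -/

namespace ConstantOfMotion

def F₂ (A x₁ x₂ x₃ x₄ x₅ : ℝ) : ℝ :=
  9 * A^2 * x₁^2 + x₅^2 + 6 * A * x₁ * x₅ - 2 * x₁^3 - 24 * A * x₁^2 * x₂
    - 12 * x₁ * x₃ * x₄ + 24 * x₂ * x₄^2 - 16 * x₁^2 * x₂^2

/-- `∇F₂(x) · v`. -/
def gradF₂Dot (A x₁ x₂ x₃ x₄ x₅ v₁ v₂ v₃ v₄ v₅ : ℝ) : ℝ :=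
  (18 * A^2 * x₁ + 6 * A * x₅ - 6 * x₁^2 - 48 * A * x₁ * x₂ - 12 * x₃ * x₄ - 32 * x₁ * x₂^2) * v₁
    + (-24 * A * x₁^2 + 24 * x₄^2 - 32 * x₁^2 * x₂) * v₂
    + (-12 * x₁ * x₄) * v₃
    + (-12 * x₁ * x₃ + 48 * x₂ * x₄) * v₄
    + (2 * x₅ + 6 * A * x₁) * v₅

theorem hasDerivAt_F₂_comp {A t v₁ v₂ v₃ v₄ v₅ : ℝ} {z₁ z₂ z₃ z₄ z₅ : ℝ → ℝ}
    (H₁ : HasDerivAt z₁ v₁ t) (H₂ : HasDerivAt z₂ v₂ t) (H₃ : HasDerivAt z₃ v₃ t)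
    (H₄ : HasDerivAt z₄ v₄ t) (H₅ : HasDerivAt z₅ v₅ t) :
    HasDerivAt (fun s => F₂ A (z₁ s) (z₂ s) (z₃ s) (z₄ s) (z₅ s))
      (gradF₂Dot A (z₁ t) (z₂ t) (z₃ t) (z₄ t) (z₅ t) v₁ v₂ v₃ v₄ v₅) t := by
  have H := ((((((((H₁.pow 2).const_mul (9 * A^2)).add (H₅.pow 2)).add
      ((H₁.const_mul (6 * A)).mul H₅)).sub ((H₁.pow 3).const_mul 2)).sub
      (((H₁.pow 2).const_mul (24 * A)).mul H₂)).sub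
      (((H₁.const_mul 12).mul H₃).mul H₄)).add
      ((H₂.const_mul 24).mul (H₄.pow 2))).sub
      (((H₁.pow 2).const_mul 16).mul (H₂.pow 2))
  refine H.congr_deriv ?_
  simp only [gradF₂Dot, Pi.pow_apply, Pi.mul_apply]
  ring

theorem gradF₂Dot_system_eq_zero (A x₁ x₂ x₃ x₄ x₅ : ℝ) :
    gradF₂Dot A x₁ x₂ x₃ x₄ x₅
      (2 * x₄)
      x₃
      (-x₁ - 16 * A * x₂ - 16 * x₂^2)
      (-A * x₁ + (1/3) * x₅ - (8/3) * x₁ * x₂)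
      (-(6 * A) * x₄ + 2 * x₁ * x₃ - 8 * x₂ * x₄) = 0 := by
  simp only [gradF₂Dot]
  ring

end ConstantOfMotion

open ConstantOfMotion in
theorem F2_constant_of_motion (A : ℝ) (z₁ z₂ z₃ z₄ z₅ : ℝ → ℝ)
    (hz₁ : Differentiable ℝ z₁) (hz₂ : Differentiable ℝ z₂)
    (hz₃ : Differentiable ℝ z₃) (hz₄ : Differentiable ℝ z₄)
    (hz₅ : Differentiable ℝ z₅)
    (h₁ : ∀ t, deriv z₁ t = 2 * z₄ t)
    (h₂ : ∀ t, deriv z₂ t = z₃ t)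
    (h₃ : ∀ t, deriv z₃ t = -z₁ t - 16 * A * z₂ t - 16 * (z₂ t)^2)
    (h₄ : ∀ t, deriv z₄ t = -A * z₁ t + (1/3) * z₅ t - (8/3) * z₁ t * z₂ t)
    (h₅ : ∀ t, deriv z₅ t = -(6 * A) * z₄ t + 2 * z₁ t * z₃ t - 8 * z₂ t * z₄ t) :
    ∀ t, deriv (fun s =>
      9 * A^2 * (z₁ s)^2 + (z₅ s)^2 + 6 * A * z₁ s * z₅ s - 2 * (z₁ s)^3
        - 24 * A * (z₁ s)^2 * z₂ s - 12 * z₁ s * z₃ s * z₄ s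
        + 24 * z₂ s * (z₄ s)^2 - 16 * (z₁ s)^2 * (z₂ s)^2) t = 0 := by
  intro t
  have H : HasDerivAt (fun s => F₂ A (z₁ s) (z₂ s) (z₃ s) (z₄ s) (z₅ s)) 0 t := by
    rw [← gradF₂Dot_system_eq_zero A (z₁ t) (z₂ t) (z₃ t) (z₄ t) (z₅ t)]
    exact hasDerivAt_F₂_comp (h₁ t ▸ (hz₁ t).hasDerivAt) (h₂ t ▸ (hz₂ t).hasDerivAt)
      (h₃ t ▸ (hz₃ t).hasDerivAt) (h₄ t ▸ (hz₄ t).hasDerivAt) (h₅ t ▸ (hz₅ t).hasDerivAt)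
  exact H.deriv
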